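/- Every simple graph on a vertex type with exactly 4 elements that is an underlying push clique contains a spanning 4-cycle: its four vertices can be listed as a, b, c, d so that ab, bc, cd and da are all edges. -/

import Mathlib

/-- A directed graph `A` on `V` is an oriented graph: irreflexive and asymmetric. -/
def IsOriented {V : Type*} (A : V → V → Prop) : Prop :=
  (∀ v, ¬ A v v) ∧ ∀ u v, A u v → ¬ A v u

/-- `u` and `v` are adjacent in `A`. -/
def Adj {V : Type*} (A : V → V → Prop) (u v : V) : Prop :=
  A u v ∨ A v u

/-- The push of `A` by the vertex set `S`: arcs with exactly one endpoint in `S`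
are reversed. -/
def push {V : Type*} (S : Set V) (A : V → V → Prop) (u v : V) : Prop :=
  (Xor' (u ∈ S) (v ∈ S) ∧ A v u) ∨ (¬ Xor' (u ∈ S) (v ∈ S) ∧ A u v)

/-- `u` and `v` agree on `w`. -/
def AgreeOn {V : Type*} (A : V → V → Prop) (u v w : V) : Prop :=
  (A w u ∧ A w v) ∨ (A u w ∧ A v w)

/-- `u` and `v` disagree on `w`. -/
def DisagreeOn {V : Type*} (A : V → V → Prop) (u v w : V) : Prop :=
  (A u w ∧ A w v) ∨ (A w u ∧ A v w)

/-- `u` and `v` are joined by a directed 2-path in `A`. -/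
def TwoPath {V : Type*} (A : V → V → Prop) (u v : V) : Prop :=
  ∃ w, (A u w ∧ A w v) ∨ (A v w ∧ A w u)

/-- `A` is an oriented clique: any two distinct vertices are adjacent or joined
by a directed 2-path. -/
def IsOrientedClique {V : Type*} (A : V → V → Prop) : Prop :=
  ∀ u v, u ≠ v → Adj A u v ∨ TwoPath A u v

/-- `A` is a push clique: every push of `A` is an oriented clique. -/
def IsPushClique {V : Type*} (A : V → V → Prop) : Prop :=
  ∀ S : Set V, IsOrientedClique (push S A)

/-- `A` is an orientation of the simple graph `G`. -/
def IsOrientationOf {V : Type*} (A : V → V → Prop) (G : SimpleGraph V) : Prop :=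
  IsOriented A ∧ ∀ u v, Adj A u v ↔ G.Adj u v

/-- `G` is an underlying push clique. -/
def IsUnderlyingPushClique {V : Type*} (G : SimpleGraph V) : Prop :=
  ∃ A : V → V → Prop, IsOrientationOf A G ∧ IsPushClique A

/-- `G` is an underlying oriented clique. -/
def IsUnderlyingOrientedClique {V : Type*} (G : SimpleGraph V) : Prop :=
  ∃ A : V → V → Prop, IsOrientationOf A G ∧ IsOrientedClique A

/-! If `u` and `v` are not adjacent, they are not adjacent in any push either, so every push joins
them by a directed 2-path. In `A` itself the middle vertex of such a path is one on which `u` and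
`v` disagree; in the push by `{u}` it is one on which they agree in `A`. Hence `u` and `v` have two
distinct common neighbours, and on four vertices these are the remaining two vertices, closing the
4-cycle `u m v m'`. -/

section

variable {V : Type*} {A : V → V → Prop} {u v w : V}

theorem adj_push_iff (S : Set V) : Adj (push S A) u v ↔ Adj A u v := by
  simp only [Adj, push, Xor'.eq_def]
  rw [xor_comm (v ∈ S)]
  tauto

theorem push_empty (A : V → V → Prop) : push ∅ A = A := by
  ext u v
  simp [push, Xor'.eq_def]

theorem twoPath_iff_exists_disagreeOn : TwoPath A u v ↔ ∃ w, DisagreeOn A u v w := by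
  unfold TwoPath DisagreeOn
  simp only [and_comm]

theorem DisagreeOn.adj_left (h : DisagreeOn A u v w) : Adj A u w := by
  unfold DisagreeOn at h; unfold Adj; tauto

theorem DisagreeOn.adj_right (h : DisagreeOn A u v w) : Adj A w v := by
  unfold DisagreeOn at h; unfold Adj; tauto

theorem disagreeOn_push_singleton_iff (hv : v ≠ u) (hw : w ≠ u) :
    DisagreeOn (push {u} A) u v w ↔ AgreeOn A u v w := by
  simp [DisagreeOn, AgreeOn, push, Xor'.eq_def, hv, hw]

theorem IsOriented.not_agreeOn_and_disagreeOn (hA : IsOriented A) :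
    ¬ (AgreeOn A u v w ∧ DisagreeOn A u v w) := by
  have := hA.2
  unfold AgreeOn DisagreeOn
  grind

theorem IsPushClique.exists_disagreeOn_push (hA : IsPushClique A) (huv : u ≠ v)
    (hnadj : ¬ Adj A u v) (S : Set V) : ∃ w, DisagreeOn (push S A) u v w :=
  twoPath_iff_exists_disagreeOn.mp <| (hA S u v huv).resolve_left <| by rwa [adj_push_iff]

theorem IsUnderlyingPushClique.exists_two_common_neighbors {G : SimpleGraph V}
    (hG : IsUnderlyingPushClique G) (huv : u ≠ v) (hnadj : ¬ G.Adj u v) :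
    ∃ m m', m ≠ m' ∧ G.Adj u m ∧ G.Adj m v ∧ G.Adj u m' ∧ G.Adj m' v := by
  obtain ⟨A, ⟨hA, hAG⟩, hpush⟩ := hG
  have hnadjA : ¬ Adj A u v := by rwa [hAG]
  obtain ⟨m, hm⟩ := hpush.exists_disagreeOn_push huv hnadjA ∅
  obtain ⟨m', hm'⟩ := hpush.exists_disagreeOn_push huv hnadjA {u}
  rw [push_empty] at hm
  have hum' : G.Adj u m' := (hAG u m').mp <| (adj_push_iff _).mp hm'.adj_left
  have hm'v : G.Adj m' v := (hAG m' v).mp <| (adj_push_iff _).mp hm'.adj_right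
  rw [disagreeOn_push_singleton_iff huv.symm hum'.ne.symm] at hm'
  refine ⟨m, m', ?_, (hAG u m).mp hm.adj_left, (hAG m v).mp hm.adj_right, hum', hm'v⟩
  rintro rfl
  exact hA.not_agreeOn_and_disagreeOn ⟨hm', hm⟩

theorem Set.insert_eq_univ_of_card_eq_four [Fintype V] (hV : Fintype.card V = 4) {a b c d : V}
    (hab : a ≠ b) (hac : a ≠ c) (had : a ≠ d) (hbc : b ≠ c) (hbd : b ≠ d) (hcd : c ≠ d) :
    ({a, b, c, d} : Set V) = Set.univ := by
  classical
  have h : ({a, b, c, d} : Finset V) = Finset.univ :=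
    Finset.eq_univ_of_card _ <| by
      rw [hV, Finset.card_eq_four]
      exact ⟨a, b, c, d, hab, hac, had, hbc, hbd, hcd, rfl⟩
  simpa using congrArg ((↑) : Finset V → Set V) h

end

theorem stmt_10 {V : Type*} [Fintype V] (hV : Fintype.card V = 4)
    (G : SimpleGraph V) (h : IsUnderlyingPushClique G) :
    ∃ a b c d : V, a ≠ b ∧ a ≠ c ∧ a ≠ d ∧ b ≠ c ∧ b ≠ d ∧ c ≠ d ∧
      ({a, b, c, d} : Set V) = Set.univ ∧
      G.Adj a b ∧ G.Adj b c ∧ G.Adj c d ∧ G.Adj d a := by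
  classical
  by_cases hcomplete : ∀ u v, u ≠ v → G.Adj u v
  · obtain ⟨a, b, c, d, hab, hac, had, hbc, hbd, hcd, -⟩ :=
      Finset.card_eq_four.mp (Finset.card_univ.trans hV)
    exact ⟨a, b, c, d, hab, hac, had, hbc, hbd, hcd,
      Set.insert_eq_univ_of_card_eq_four hV hab hac had hbc hbd hcd,
      hcomplete _ _ hab, hcomplete _ _ hbc, hcomplete _ _ hcd, hcomplete _ _ had.symm⟩
  · push Not at hcomplete
    obtain ⟨u, v, huv, hnadj⟩ := hcomplete
    obtain ⟨m, m', hmm', hum, hmv, hum', hm'v⟩ := h.exists_two_common_neighbors huv hnadj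
    exact ⟨u, m, v, m', hum.ne, huv, hum'.ne, hmv.ne, hmm', hm'v.ne.symm,
      Set.insert_eq_univ_of_card_eq_four hV hum.ne huv hum'.ne hmv.ne hmm' hm'v.ne.symm,
      hum, hmv, hm'v.symm, hum'.symm⟩
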